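/- Let T ≥ 1 be an integer and α ∈ [0,1). Suppose that for every g > 0 we are given a measurable space H_g with probability measures P₁^g, P₂^g, a measurable map N₁^g : H_g → ℕ with N₁^g ≤ T, losses R₁^g = g·(T − N₁^g) and R₂^g = g·N₁^g, and D_H²(P₁^g‖P₂^g) ≤ g²T/2. Then sup_{g > 0} inf_{t ∈ ℝ} { t + (1/(1−α))·(½∫(R₁^g−t)₊ dP₁^g + ½∫(R₂^g−t)₊ dP₂^g) } ≥ c_α·√T, where c_α = 2/(27(1−α)) for 0 ≤ α ≤ 1/3 and c_α = √α/(3√3) for 1/3 ≤ α < 1. -/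

import Mathlib

/-!
Le Cam's two-point method. Let `p, q` be the densities of `P₁, P₂` with respect to `P₁ + P₂`, so
`p + q = 1`. A squared Hellinger distance at most `c² / 2` forces the overlap `∫ min(p, q)` to be
at least `1 - c`, hence `∫ ψ₁ dP₁ + ∫ ψ₂ dP₂ ≥ (1 - c) d` for nonnegative `ψ₁, ψ₂` with
`ψ₁ + ψ₂ ≥ d`. At scale `g = c / √T` the Hellinger hypothesis gives exactly this budget, and the two
losses always add up to `g T = c √T`. For `α ≤ 1/3` take `c = 1/2`: the CVaR objective dominates the
mean loss, which is at least `√T / 8`. For `α > 1/3` take `c = α` and `ψᵢ = (Rᵢ - t)₊`: then the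
objective at every threshold `t` is at least `α √T / 2`.
-/

open MeasureTheory

/-- Squared Hellinger divergence, computed with the dominating measure `P + Q`. -/
noncomputable def sqHellinger {X : Type*} [MeasurableSpace X] (P Q : Measure X) : ℝ :=
  1 - ∫ x, Real.sqrt ((P.rnDeriv (P + Q) x).toReal * (Q.rnDeriv (P + Q) x).toReal) ∂(P + Q)

/-- The optimized constant `c_α`. -/
noncomputable def cAlpha (α : ℝ) : ℝ :=
  if α ≤ 1 / 3 then 2 / (27 * (1 - α)) else Real.sqrt α / (3 * Real.sqrt 3)

section LeCam

variable {X : Type*} [MeasurableSpace X] {P Q : Measure X}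

/-- With `u = |p - 1/2|` one has `min p q = 1/2 - u` and `√(p q) ≤ 1/2 - u²`, so this is
`(u - c/2)² ≥ 0`. -/
lemma add_sqrt_mul_le_mul_min {p q : ℝ} (c : ℝ) (hp : 0 ≤ p) (hq : 0 ≤ q) (hpq : p + q = 1) :
    c / 2 - c ^ 2 / 4 - 1 / 2 + √(p * q) ≤ c * min p q := by
  have hs := Real.sq_sqrt (mul_nonneg hp hq)
  have hs0 := Real.sqrt_nonneg (p * q)
  rcases le_total p q with h | h
  · rw [min_eq_left h]
    nlinarith [sq_nonneg (√(p * q) - 1 / 2), sq_nonneg (1 / 2 - p - c / 2)]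
  · rw [min_eq_right h]
    nlinarith [sq_nonneg (√(p * q) - 1 / 2), sq_nonneg (1 / 2 - q - c / 2)]

noncomputable def overlap (P Q : Measure X) : ℝ :=
  ∫ x, min (P.rnDeriv (P + Q) x).toReal (Q.rnDeriv (P + Q) x).toReal ∂(P + Q)

lemma ae_toReal_rnDeriv_add_toReal_rnDeriv [IsFiniteMeasure P] [IsFiniteMeasure Q] :
    ∀ᵐ x ∂(P + Q), (P.rnDeriv (P + Q) x).toReal + (Q.rnDeriv (P + Q) x).toReal = 1 := by
  filter_upwards [Measure.rnDeriv_add P Q (P + Q), (P + Q).rnDeriv_self,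
    P.rnDeriv_lt_top (P + Q), Q.rnDeriv_lt_top (P + Q)] with x hadd hself hP hQ
  rw [← ENNReal.toReal_add hP.ne hQ.ne, ← Pi.add_apply, ← hadd, hself, ENNReal.toReal_one]

lemma one_sub_le_overlap [IsProbabilityMeasure P] [IsProbabilityMeasure Q] {c : ℝ} (hc : 0 < c)
    (hH : sqHellinger P Q ≤ c ^ 2 / 2) : 1 - c ≤ overlap P Q := by
  set p : X → ℝ := fun x ↦ (P.rnDeriv (P + Q) x).toReal
  set q : X → ℝ := fun x ↦ (Q.rnDeriv (P + Q) x).toReal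
  have hpq : ∀ᵐ x ∂(P + Q), p x + q x = 1 := ae_toReal_rnDeriv_add_toReal_rnDeriv
  have hp : Integrable p (P + Q) := Measure.integrable_toReal_rnDeriv
  have hq : Integrable q (P + Q) := Measure.integrable_toReal_rnDeriv
  have hsqrt : Integrable (fun x ↦ √(p x * q x)) (P + Q) := by
    refine Integrable.of_bound (((Measure.measurable_rnDeriv _ _).ennreal_toReal.mul
      (Measure.measurable_rnDeriv _ _).ennreal_toReal).sqrt.aestronglyMeasurable) 1 ?_
    filter_upwards [hpq] with x hx
    rw [Real.norm_of_nonneg (Real.sqrt_nonneg _), Real.sqrt_le_one]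
    nlinarith [(ENNReal.toReal_nonneg : 0 ≤ p x), (ENNReal.toReal_nonneg : 0 ≤ q x)]
  have hmono : ∫ x, (c / 2 - c ^ 2 / 4 - 1 / 2 + √(p x * q x)) ∂(P + Q) ≤
      ∫ x, c * min (p x) (q x) ∂(P + Q) := by
    refine integral_mono_ae ((integrable_const _).add hsqrt) ((hp.inf hq).const_mul c) ?_
    filter_upwards [hpq] with x hx
    exact add_sqrt_mul_le_mul_min c ENNReal.toReal_nonneg ENNReal.toReal_nonneg hx
  rw [integral_add (integrable_const _) hsqrt, integral_const, integral_const_mul] at hmono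
  rw [measureReal_add_apply, probReal_univ, probReal_univ, smul_eq_mul] at hmono
  change 1 - ∫ x, √(p x * q x) ∂(P + Q) ≤ _ at hH
  change 1 - c ≤ ∫ x, min (p x) (q x) ∂(P + Q)
  refine le_of_mul_le_mul_left ?_ hc
  linarith

lemma mul_overlap_le [IsFiniteMeasure P] [IsFiniteMeasure Q] {ψ₁ ψ₂ : X → ℝ} {d : ℝ}
    (hψ₁ : Integrable ψ₁ P) (hψ₂ : Integrable ψ₂ Q) (hψ₁0 : 0 ≤ ψ₁) (hψ₂0 : 0 ≤ ψ₂)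
    (hd : 0 ≤ d) (hsum : ∀ x, d ≤ ψ₁ x + ψ₂ x) :
    d * overlap P Q ≤ ∫ x, ψ₁ x ∂P + ∫ x, ψ₂ x ∂Q := by
  have hP : P ≪ P + Q := Measure.AbsolutelyContinuous.rfl.add_right Q
  have hQ : Q ≪ P + Q := by rw [add_comm]; exact Measure.AbsolutelyContinuous.rfl.add_right P
  rw [overlap, ← integral_toReal_rnDeriv_mul hP, ← integral_toReal_rnDeriv_mul hQ,
    ← integral_add ((integrable_toReal_rnDeriv_mul_iff hP).2 hψ₁)
      ((integrable_toReal_rnDeriv_mul_iff hQ).2 hψ₂), ← integral_const_mul]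
  refine integral_mono_of_nonneg (ae_of_all _ fun x ↦ by positivity)
    (((integrable_toReal_rnDeriv_mul_iff hP).2 hψ₁).add
      ((integrable_toReal_rnDeriv_mul_iff hQ).2 hψ₂)) (ae_of_all _ fun x ↦ ?_)
  set p := (P.rnDeriv (P + Q) x).toReal
  set q := (Q.rnDeriv (P + Q) x).toReal
  have hmin : 0 ≤ min p q := le_min ENNReal.toReal_nonneg ENNReal.toReal_nonneg
  calc d * min p q ≤ (ψ₁ x + ψ₂ x) * min p q := mul_le_mul_of_nonneg_right (hsum x) hmin
    _ ≤ p * ψ₁ x + q * ψ₂ x := by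
      nlinarith [mul_nonneg (sub_nonneg.2 (min_le_left p q)) (hψ₁0 x),
        mul_nonneg (sub_nonneg.2 (min_le_right p q)) (hψ₂0 x)]

end LeCam

section CVaR

variable {X : Type*} [MeasurableSpace X] {P₁ P₂ : Measure X} {R₁ R₂ : X → ℝ} {α : ℝ}

noncomputable def cvarObjective (α t : ℝ) (P₁ P₂ : Measure X) (R₁ R₂ : X → ℝ) : ℝ :=
  t + 1 / (1 - α) * (1 / 2 * ∫ x, max (R₁ x - t) 0 ∂P₁ + 1 / 2 * ∫ x, max (R₂ x - t) 0 ∂P₂)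

lemma sub_le_integral_max_sub [IsProbabilityMeasure P₁] (hR₁ : Integrable R₁ P₁) (t : ℝ) :
    ∫ x, R₁ x ∂P₁ - t ≤ ∫ x, max (R₁ x - t) 0 ∂P₁ := by
  have hRt := hR₁.sub (integrable_const t)
  calc ∫ x, R₁ x ∂P₁ - t = ∫ x, (R₁ x - t) ∂P₁ := by
        rw [integral_sub hR₁ (integrable_const t), integral_const, probReal_univ, one_smul]
    _ ≤ ∫ x, max (R₁ x - t) 0 ∂P₁ :=
        integral_mono hRt hRt.pos_part fun x ↦ le_max_left _ _

lemma mean_le_cvarObjective [IsProbabilityMeasure P₁] [IsProbabilityMeasure P₂]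
    (hα : α ∈ Set.Ico 0 1) (hR₁ : Integrable R₁ P₁) (hR₂ : Integrable R₂ P₂) (t : ℝ) :
    (∫ x, R₁ x ∂P₁ + ∫ x, R₂ x ∂P₂) / 2 ≤ cvarObjective α t P₁ P₂ R₁ R₂ := by
  have hk : 1 ≤ 1 / (1 - α) := by rw [le_div_iff₀ (by linarith [hα.2])]; linarith [hα.1]
  have h₁ := sub_le_integral_max_sub hR₁ t
  have h₂ := sub_le_integral_max_sub hR₂ t
  have hI : 0 ≤ 1 / 2 * ∫ x, max (R₁ x - t) 0 ∂P₁ + 1 / 2 * ∫ x, max (R₂ x - t) 0 ∂P₂ := by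
    have := integral_nonneg (μ := P₁) (f := fun x ↦ max (R₁ x - t) 0) fun x ↦ le_max_right _ _
    have := integral_nonneg (μ := P₂) (f := fun x ↦ max (R₂ x - t) 0) fun x ↦ le_max_right _ _
    positivity
  calc (∫ x, R₁ x ∂P₁ + ∫ x, R₂ x ∂P₂) / 2
      ≤ t + (1 / 2 * ∫ x, max (R₁ x - t) 0 ∂P₁ + 1 / 2 * ∫ x, max (R₂ x - t) 0 ∂P₂) := by
        linarith
    _ ≤ cvarObjective α t P₁ P₂ R₁ R₂ := add_le_add_right (le_mul_of_one_le_left hI hk) t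

lemma half_le_cvarObjective_of_le {L t : ℝ} (hα : α < 1)
    (h : (1 - α) * (L - 2 * t) ≤ ∫ x, max (R₁ x - t) 0 ∂P₁ + ∫ x, max (R₂ x - t) 0 ∂P₂) :
    L / 2 ≤ cvarObjective α t P₁ P₂ R₁ R₂ := by
  unfold cvarObjective
  set I₁ := ∫ x, max (R₁ x - t) 0 ∂P₁
  set I₂ := ∫ x, max (R₂ x - t) 0 ∂P₂
  have hdiv : L - 2 * t ≤ (I₁ + I₂) / (1 - α) := by
    rw [le_div_iff₀ (by linarith)]
    linarith
  have hrw : 1 / (1 - α) * (1 / 2 * I₁ + 1 / 2 * I₂) = (I₁ + I₂) / (1 - α) / 2 := by ring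
  linarith

end CVaR

section Losses

variable {X : Type*} [MeasurableSpace X] {P Q : Measure X} [IsProbabilityMeasure P]
  [IsProbabilityMeasure Q] {R₁ R₂ : X → ℝ} {L c : ℝ}

lemma one_sub_mul_le_integral_add_integral (hc : 0 < c) (hH : sqHellinger P Q ≤ c ^ 2 / 2)
    (hR₁ : Integrable R₁ P) (hR₂ : Integrable R₂ Q) (hR₁0 : 0 ≤ R₁) (hR₂0 : 0 ≤ R₂)
    (hsum : ∀ x, R₁ x + R₂ x = L) :
    (1 - c) * L ≤ ∫ x, R₁ x ∂P + ∫ x, R₂ x ∂Q := by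
  have hL : 0 ≤ L := by
    obtain ⟨x⟩ := nonempty_of_isProbabilityMeasure P
    exact hsum x ▸ add_nonneg (hR₁0 x) (hR₂0 x)
  calc (1 - c) * L
      ≤ L * overlap P Q := by
        rw [mul_comm]
        exact mul_le_mul_of_nonneg_left (one_sub_le_overlap hc hH) hL
    _ ≤ _ := mul_overlap_le hR₁ hR₂ hR₁0 hR₂0 hL fun x ↦ (hsum x).ge

lemma one_sub_mul_le_integral_max_sub_add_integral_max_sub (hc : 0 < c) (hc1 : c ≤ 1)
    (hH : sqHellinger P Q ≤ c ^ 2 / 2) (hR₁ : Integrable R₁ P) (hR₂ : Integrable R₂ Q)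
    (hsum : ∀ x, R₁ x + R₂ x = L) (t : ℝ) :
    (1 - c) * (L - 2 * t) ≤ ∫ x, max (R₁ x - t) 0 ∂P + ∫ x, max (R₂ x - t) 0 ∂Q := by
  have hd : 0 ≤ max (L - 2 * t) 0 := le_max_right _ _
  calc (1 - c) * (L - 2 * t) ≤ (1 - c) * max (L - 2 * t) 0 :=
        mul_le_mul_of_nonneg_left (le_max_left _ _) (by linarith)
    _ ≤ max (L - 2 * t) 0 * overlap P Q := by
        rw [mul_comm]
        exact mul_le_mul_of_nonneg_left (one_sub_le_overlap hc hH) hd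
    _ ≤ _ := by
        refine mul_overlap_le (hR₁.sub (integrable_const t)).pos_part
          (hR₂.sub (integrable_const t)).pos_part (fun x ↦ le_max_right _ _)
          (fun x ↦ le_max_right _ _) hd fun x ↦ max_le ?_ (by positivity)
        linarith [hsum x, le_max_left (R₁ x - t) 0, le_max_left (R₂ x - t) 0]

end Losses

lemma integrable_natCast_of_le {X : Type*} [MeasurableSpace X] {μ : Measure X}
    [IsFiniteMeasure μ] {N : X → ℕ} (hN : Measurable N) {T : ℕ} (hNT : ∀ x, N x ≤ T) :
    Integrable (fun x ↦ (N x : ℝ)) μ :=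
  .of_mem_Icc 0 T (by fun_prop) (ae_of_all _ fun x ↦ ⟨Nat.cast_nonneg _, by exact_mod_cast hNT x⟩)

lemma integrable_const_mul_sub_natCast {X : Type*} [MeasurableSpace X] {μ : Measure X}
    [IsFiniteMeasure μ] {N : X → ℕ} (hN : Measurable N) {T : ℕ} (hNT : ∀ x, N x ≤ T) (g : ℝ) :
    Integrable (fun x ↦ g * ((T : ℝ) - N x)) μ :=
  ((integrable_const _).sub (integrable_natCast_of_le hN hNT)).const_mul g

section Bandit

variable {X : Type*} [MeasurableSpace X] {P Q : Measure X} [IsProbabilityMeasure P]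
  [IsProbabilityMeasure Q] {T : ℕ} {N : X → ℕ} {α g c : ℝ}

lemma one_sub_mul_le_cvarObjective_bandit (hN : Measurable N) (hNT : ∀ x, N x ≤ T)
    (hα : α ∈ Set.Ico 0 1) (hg : 0 ≤ g) (hc : 0 < c) (hH : sqHellinger P Q ≤ c ^ 2 / 2)
    (t : ℝ) :
    (1 - c) * (g * T) / 2 ≤
      cvarObjective α t P Q (fun x ↦ g * ((T : ℝ) - N x)) (fun x ↦ g * (N x : ℝ)) := by
  have hR₁ := integrable_const_mul_sub_natCast (μ := P) hN hNT g
  have hR₂ : Integrable (fun x ↦ g * (N x : ℝ)) Q := (integrable_natCast_of_le hN hNT).const_mul g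
  have hmean := one_sub_mul_le_integral_add_integral hc hH hR₁ hR₂
    (fun x ↦ mul_nonneg hg (sub_nonneg.2 (Nat.cast_le.2 (hNT x))))
    (fun x ↦ mul_nonneg hg (Nat.cast_nonneg _)) (L := g * T) fun x ↦ by ring
  exact (div_le_div_of_nonneg_right hmean two_pos.le).trans (mean_le_cvarObjective hα hR₁ hR₂ t)

lemma half_le_cvarObjective_bandit (hN : Measurable N) (hNT : ∀ x, N x ≤ T)
    (hα : α ∈ Set.Ioo 0 1) (hH : sqHellinger P Q ≤ α ^ 2 / 2) (t : ℝ) :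
    g * T / 2 ≤ cvarObjective α t P Q (fun x ↦ g * ((T : ℝ) - N x)) (fun x ↦ g * (N x : ℝ)) := by
  have hR₁ := integrable_const_mul_sub_natCast (μ := P) hN hNT g
  have hR₂ : Integrable (fun x ↦ g * (N x : ℝ)) Q := (integrable_natCast_of_le hN hNT).const_mul g
  exact half_le_cvarObjective_of_le hα.2 <| one_sub_mul_le_integral_max_sub_add_integral_max_sub
    hα.1 hα.2.le hH hR₁ hR₂ (L := g * T) (fun x ↦ by ring) t

end Bandit

lemma cAlpha_le_of_le_one_third {α : ℝ} (h : α ≤ 1 / 3) : cAlpha α ≤ 1 / 8 := by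
  rw [cAlpha, if_pos h, div_le_div_iff₀ (by linarith) (by norm_num)]
  linarith

lemma cAlpha_le_of_one_third_lt {α : ℝ} (h : 1 / 3 < α) : cAlpha α ≤ α / 2 := by
  rw [cAlpha, if_neg (not_le.2 h), div_le_iff₀ (by positivity)]
  have ha := Real.mul_self_sqrt (by linarith : (0 : ℝ) ≤ α)
  have hab : 1 ≤ √α * √3 := by
    rw [← Real.sqrt_mul (by linarith), Real.one_le_sqrt]
    linarith
  nlinarith [Real.sqrt_nonneg α]

theorem two_armed_gaussian_bandit_worst_case_cvar
    (T : ℕ) (hT : 1 ≤ T)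
    (α : ℝ) (hα : α ∈ Set.Ico (0 : ℝ) 1)
    (H : ℝ → Type*) [∀ g, MeasurableSpace (H g)]
    (P₁ P₂ : ∀ g : ℝ, Measure (H g))
    (hP₁ : ∀ g, IsProbabilityMeasure (P₁ g)) (hP₂ : ∀ g, IsProbabilityMeasure (P₂ g))
    (N₁ : ∀ g : ℝ, H g → ℕ) (hN₁ : ∀ g, Measurable (N₁ g))
    (hN₁T : ∀ g h, N₁ g h ≤ T)
    (hHell : ∀ g : ℝ, 0 < g → sqHellinger (P₁ g) (P₂ g) ≤ g ^ 2 * T / 2) :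
    ((cAlpha α * Real.sqrt T : ℝ) : EReal) ≤
      ⨆ g : {g : ℝ // 0 < g},
        ((⨅ t : ℝ, t + (1 / (1 - α)) *
            ((1 / 2) * (∫ h, max (g.1 * ((T : ℝ) - (N₁ g.1 h : ℝ)) - t) 0 ∂(P₁ g.1))
              + (1 / 2) * (∫ h, max (g.1 * (N₁ g.1 h : ℝ) - t) 0 ∂(P₂ g.1))) : ℝ) : EReal) := by
  have hsT : 0 < √(T : ℝ) := Real.sqrt_pos.2 (by exact_mod_cast hT)
  have hTT : √(T : ℝ) ^ 2 = T := Real.sq_sqrt (Nat.cast_nonneg T)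
  have scale : ∀ c > 0, ∃ g : {g : ℝ // 0 < g},
      sqHellinger (P₁ g) (P₂ g) ≤ c ^ 2 / 2 ∧ g.1 * T = c * √T := fun c hc ↦
    ⟨⟨c / √T, div_pos hc hsT⟩, by
      convert hHell _ (div_pos hc hsT) using 2
      rw [div_pow, hTT, div_mul_cancel₀ _ (by positivity)],
     by rw [div_mul_eq_mul_div, div_eq_iff hsT.ne', mul_assoc, ← sq, hTT]⟩
  rcases le_or_gt α (1 / 3) with hα3 | hα3
  · obtain ⟨g, hH, hgT⟩ := scale (1 / 2) (by norm_num)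
    have := hP₁ g.1
    have := hP₂ g.1
    refine le_iSup_of_le g (EReal.coe_le_coe_iff.2 (le_ciInf fun t ↦ ?_))
    calc cAlpha α * √T ≤ (1 - 1 / 2) * (g.1 * T) / 2 := by
          rw [hgT]; nlinarith [cAlpha_le_of_le_one_third hα3]
      _ ≤ _ := one_sub_mul_le_cvarObjective_bandit (hN₁ g) (hN₁T g) hα g.2.le (by norm_num) hH t
  · obtain ⟨g, hH, hgT⟩ := scale α (by linarith)
    have := hP₁ g.1
    have := hP₂ g.1
    refine le_iSup_of_le g (EReal.coe_le_coe_iff.2 (le_ciInf fun t ↦ ?_))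
    calc cAlpha α * √T ≤ g.1 * T / 2 := by
          rw [hgT]; nlinarith [cAlpha_le_of_one_third_lt hα3]
      _ ≤ _ := half_le_cvarObjective_bandit (hN₁ g) (hN₁T g) ⟨by linarith, hα.2⟩ hH t
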